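/- arXiv:2509.13653 — 2 statements merged into one kernel-verified Lean document; each statement's English description precedes it below -/
import Mathlib

section
/- Let Σ* ⊆ Δ^n × Δ^m denote the (nonempty) set of Nash equilibria of the game given by U. There exists a constant C > 0, depending only on U, such that for every profile σ ∈ Δ^n × Δ^m, the Euclidean distance from σ to the set Σ* satisfies dist(σ, Σ*) ≤ ε(σ)/C. -/
open Finset

/-- Squared Euclidean norm of a vector. -/
noncomputable def sqnorm {k : ℕ} (v : Fin k → ℝ) : ℝ := ∑ i, (v i) ^ 2

/-- Euclidean norm of a concatenated profile vector in ℝ^(k+l). -/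
noncomputable def pnorm {k l : ℕ} (v : Fin k → ℝ) (w : Fin l → ℝ) : ℝ :=
  Real.sqrt (sqnorm v + sqnorm w)

/-- Bilinear payoff xᵀUy. -/
def payoff {k l : ℕ} (U : Matrix (Fin k) (Fin l) ℝ) (x : Fin k → ℝ) (y : Fin l → ℝ) : ℝ :=
  ∑ i, ∑ j, x i * U i j * y j

/-- Regularized SCCP objective G(x,y) = -xᵀUy + μ/2 ‖x - xʳ‖² - μ/2 ‖y - yʳ‖². -/
noncomputable def sccpObj {k l : ℕ} (U : Matrix (Fin k) (Fin l) ℝ) (μ : ℝ)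
    (xr : Fin k → ℝ) (yr : Fin l → ℝ) (x : Fin k → ℝ) (y : Fin l → ℝ) : ℝ :=
  -(payoff U x y) + μ / 2 * sqnorm (x - xr) - μ / 2 * sqnorm (y - yr)

/-- (x̂, ŷ) is a saddle point of the SCCP with weight μ and reference (xr, yr). -/
def IsSaddle {k l : ℕ} (U : Matrix (Fin k) (Fin l) ℝ) (μ : ℝ)
    (xr : Fin k → ℝ) (yr : Fin l → ℝ) (xh : Fin k → ℝ) (yh : Fin l → ℝ) : Prop :=
  xh ∈ stdSimplex ℝ (Fin k) ∧ yh ∈ stdSimplex ℝ (Fin l) ∧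
  (∀ y ∈ stdSimplex ℝ (Fin l), sccpObj U μ xr yr xh y ≤ sccpObj U μ xr yr xh yh) ∧
  (∀ x ∈ stdSimplex ℝ (Fin k), sccpObj U μ xr yr xh yh ≤ sccpObj U μ xr yr x yh)

/-- (x*, y*) is a Nash equilibrium of the zero-sum game with payoff matrix U. -/
def IsNash {k l : ℕ} (U : Matrix (Fin k) (Fin l) ℝ)
    (xs : Fin k → ℝ) (ys : Fin l → ℝ) : Prop :=
  xs ∈ stdSimplex ℝ (Fin k) ∧ ys ∈ stdSimplex ℝ (Fin l) ∧
  (∀ x ∈ stdSimplex ℝ (Fin k), payoff U x ys ≤ payoff U xs ys) ∧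
  (∀ y ∈ stdSimplex ℝ (Fin l), payoff U xs ys ≤ payoff U xs y)

/-- Exploitability ε(σ) = max_{x'} x'ᵀUy - min_{y'} xᵀUy'. -/
noncomputable def exploit {k l : ℕ} (U : Matrix (Fin k) (Fin l) ℝ)
    (x : Fin k → ℝ) (y : Fin l → ℝ) : ℝ :=
  sSup ((fun x' => payoff U x' y) '' stdSimplex ℝ (Fin k)) -
  sInf ((fun y' => payoff U x y') '' stdSimplex ℝ (Fin l))

/-- Transformed loss for the x-player: ℓ_x = -Uy + μ(x - xʳ). -/
noncomputable def lossX {k l : ℕ} (U : Matrix (Fin k) (Fin l) ℝ) (μ : ℝ)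
    (xr : Fin k → ℝ) (x : Fin k → ℝ) (y : Fin l → ℝ) : Fin k → ℝ :=
  fun i => -(∑ j, U i j * y j) + μ * (x i - xr i)

/-- Transformed loss for the y-player: ℓ_y = Uᵀx + μ(y - yʳ). -/
noncomputable def lossY {k l : ℕ} (U : Matrix (Fin k) (Fin l) ℝ) (μ : ℝ)
    (yr : Fin l → ℝ) (x : Fin k → ℝ) (y : Fin l → ℝ) : Fin l → ℝ :=
  fun j => (∑ i, U i j * x i) + μ * (y j - yr j)

/-- Immediate regret r = ⟨ℓ, p⟩·𝟏 - ℓ. -/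
noncomputable def imRegret {k : ℕ} (ℓ : Fin k → ℝ) (p : Fin k → ℝ) : Fin k → ℝ :=
  fun i => (∑ i', ℓ i' * p i') - ℓ i


open scoped RealInnerProductSpace

set_option linter.unusedSectionVars false
set_option linter.unusedVariables false

/-- Coefficients supported in `S` that sum (against `a`) to zero must vanish. -/
def MSIndep {ι V : Type*} [Fintype ι] [AddCommGroup V] [Module ℝ V]
    (a : ι → V) (S : Finset ι) : Prop :=
  ∀ c : ι → ℝ, (∀ i ∉ S, c i = 0) → ∑ i, c i • a i = 0 → ∀ i, c i = 0

lemma ms_caratheodory_aux {ι V : Type*} [Fintype ι] [AddCommGroup V] [Module ℝ V]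
    (a : ι → V) (k : ℕ) :
    ∀ lam : ι → ℝ, (univ.filter (fun i => lam i ≠ 0)).card ≤ k → (∀ i, 0 ≤ lam i) →
    ∃ mu : ι → ℝ, (∀ i, 0 ≤ mu i) ∧ (∀ i, lam i = 0 → mu i = 0) ∧
      ∑ i, mu i • a i = ∑ i, lam i • a i ∧
      MSIndep a (univ.filter (fun i => mu i ≠ 0)) := by
  classical
  induction k with
  | zero =>
    intro lam hcard hpos
    have hz : ∀ i, lam i = 0 := by
      intro i
      by_contra h
      have : i ∈ univ.filter (fun i => lam i ≠ 0) := by simp [h]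
      have := Finset.card_pos.mpr ⟨i, this⟩
      omega
    refine ⟨lam, hpos, fun i _ => hz i, rfl, ?_⟩
    intro c hc hsum i
    exact hc i (by simp [hz i])
  | succ k ih =>
    intro lam hcard hpos
    by_cases hind : MSIndep a (univ.filter (fun i => lam i ≠ 0))
    · exact ⟨lam, hpos, fun i h => h, rfl, hind⟩
    · -- get a nontrivial supported dependency
      simp only [MSIndep, not_forall] at hind
      obtain ⟨c, hcsupp, hcsum, i0, hc0⟩ := hind
      have hcsupp' : ∀ i, lam i = 0 → c i = 0 := by
        intro i hi; exact hcsupp i (by simp [hi])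
      -- wlog some coefficient is positive
      obtain ⟨d, hdsupp, hdsum, i1, hd1⟩ :
          ∃ d : ι → ℝ, (∀ i, lam i = 0 → d i = 0) ∧ (∑ i, d i • a i = 0) ∧ ∃ i, 0 < d i := by
        rcases lt_trichotomy (c i0) 0 with h | h | h
        · exact ⟨-c, fun i hi => by simp [hcsupp' i hi], by simp [hcsum], i0, by simpa using h⟩
        · exact absurd h hc0
        · exact ⟨c, hcsupp', hcsum, i0, h⟩
      set F : Finset ι := univ.filter (fun i => 0 < d i) with hF
      have hFne : F.Nonempty := ⟨i1, by simp [hF, hd1]⟩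
      obtain ⟨j0, hj0F, hj0min⟩ := F.exists_min_image (fun i => lam i / d i) hFne
      have hdj0 : 0 < d j0 := by simpa [hF] using hj0F
      set t : ℝ := lam j0 / d j0 with htdef
      have ht : 0 ≤ t := div_nonneg (hpos j0) hdj0.le
      set mu : ι → ℝ := fun i => lam i - t * d i with hmu
      have hmupos : ∀ i, 0 ≤ mu i := by
        intro i
        rcases le_or_gt (d i) 0 with h | h
        · have : t * d i ≤ 0 := mul_nonpos_of_nonneg_of_nonpos ht h
          simp only [hmu]; linarith [hpos i]
        · have hiF : i ∈ F := by simp [hF, h]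
          have := hj0min i hiF
          have : t ≤ lam i / d i := this
          have := (le_div_iff₀ h).1 this
          simp only [hmu]; linarith
      have hmusupp : ∀ i, lam i = 0 → mu i = 0 := by
        intro i hi; simp [hmu, hi, hdsupp i hi]
      have hmusum : ∑ i, mu i • a i = ∑ i, lam i • a i := by
        simp only [hmu, sub_smul, Finset.sum_sub_distrib, mul_smul]
        rw [← Finset.smul_sum, hdsum, smul_zero, sub_zero]
      have hmuj0 : mu j0 = 0 := by
        simp only [hmu, htdef]
        field_simp
        ring
      have hlamj0 : lam j0 ≠ 0 := by
        intro h
        exact absurd (hdsupp j0 h) (by positivity)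
      -- the support strictly decreased
      have hsub : univ.filter (fun i => mu i ≠ 0) ⊆
          (univ.filter (fun i => lam i ≠ 0)).erase j0 := by
        intro i hi
        simp only [mem_filter, mem_univ, true_and] at hi
        refine Finset.mem_erase.2 ⟨?_, ?_⟩
        · rintro rfl; exact hi hmuj0
        · simp only [mem_filter, mem_univ, true_and]
          intro h; exact hi (hmusupp i h)
      have hcard' : (univ.filter (fun i => mu i ≠ 0)).card ≤ k := by
        have h1 := Finset.card_le_card hsub
        have h2 : j0 ∈ univ.filter (fun i => lam i ≠ 0) := by simp [hlamj0]
        have h3 := Finset.card_erase_of_mem h2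
        omega
      obtain ⟨nu, h1, h2, h3, h4⟩ := ih mu hcard' hmupos
      exact ⟨nu, h1, fun i hi => h2 i (hmusupp i hi), h3.trans hmusum, h4⟩

lemma ms_caratheodory {ι V : Type*} [Fintype ι] [AddCommGroup V] [Module ℝ V]
    (a : ι → V) (lam : ι → ℝ) (hpos : ∀ i, 0 ≤ lam i) :
    ∃ mu : ι → ℝ, (∀ i, 0 ≤ mu i) ∧ (∀ i, lam i = 0 → mu i = 0) ∧
      ∑ i, mu i • a i = ∑ i, lam i • a i ∧
      MSIndep a (univ.filter (fun i => mu i ≠ 0)) := by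
  classical
  exact ms_caratheodory_aux a (univ.filter (fun i => lam i ≠ 0)).card lam le_rfl hpos


section
variable {ι κ : Type*} [Fintype ι] [Fintype κ]

/-- The linear "combination" map as a LinearMap. -/
noncomputable def combo (a : ι → EuclideanSpace ℝ κ) : (ι → ℝ) →ₗ[ℝ] EuclideanSpace ℝ κ where
  toFun := fun lam => ∑ i, lam i • a i
  map_add' := by intro f g; simp [add_smul, Finset.sum_add_distrib]
  map_smul' := by intro c f; simp [mul_smul, Finset.smul_sum]

lemma combo_apply (a : ι → EuclideanSpace ℝ κ) (lam : ι → ℝ) :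
    combo a lam = ∑ i, lam i • a i := rfl

lemma supported_closed (S : Finset ι) :
    IsClosed {lam : ι → ℝ | ∀ i ∉ S, lam i = 0} := by
  have : {lam : ι → ℝ | ∀ i ∉ S, lam i = 0} =
      ⋂ i, ⋂ (_ : i ∉ S), {lam : ι → ℝ | lam i = 0} := by
    ext lam; simp [Set.mem_iInter]
  rw [this]
  exact isClosed_iInter fun i => isClosed_iInter fun _ =>
    isClosed_eq (continuous_apply i) continuous_const

lemma indep_bound (a : ι → EuclideanSpace ℝ κ) (S : Finset ι) (h : MSIndep a S) :
    ∃ mS : ℝ, 0 < mS ∧ ∀ lam : ι → ℝ, (∀ i ∉ S, lam i = 0) →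
      mS * ‖lam‖ ≤ ‖∑ i, lam i • a i‖ := by
  classical
  by_cases htriv : ∀ lam : ι → ℝ, (∀ i ∉ S, lam i = 0) → lam = 0
  · refine ⟨1, one_pos, fun lam hlam => ?_⟩
    rw [htriv lam hlam]; simp
  · push_neg at htriv
    obtain ⟨lam₀, hlam₀supp, hlam₀ne⟩ := htriv
    set T : Set (ι → ℝ) := {lam | ∀ i ∉ S, lam i = 0} ∩ Metric.sphere 0 1 with hT
    have hTcompact : IsCompact T := by
      exact (isCompact_sphere (0 : ι → ℝ) 1).inter_left (supported_closed S)
    have hTne : T.Nonempty := by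
      refine ⟨‖lam₀‖⁻¹ • lam₀, ⟨fun i hi => by simp [hlam₀supp i hi], ?_⟩⟩
      simp [norm_smul, norm_ne_zero_iff.2 hlam₀ne,
        inv_mul_cancel₀ (norm_ne_zero_iff.2 hlam₀ne)]
    have hcont : Continuous fun lam : ι → ℝ => ‖∑ i, lam i • a i‖ :=
      ((combo a).toContinuousLinearMap.continuous).norm
    obtain ⟨lam₁, hlam₁T, hmin⟩ := hTcompact.exists_isMinOn hTne hcont.continuousOn
    have hlam₁ne : lam₁ ≠ 0 := by
      intro hz
      have := hlam₁T.2
      rw [hz] at this; simp at this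
    have hpos : 0 < ‖∑ i, lam₁ i • a i‖ := by
      rw [norm_pos_iff]
      intro hz
      exact hlam₁ne (funext fun i => h lam₁ hlam₁T.1 hz i)
    refine ⟨‖∑ i, lam₁ i • a i‖, hpos, fun lam hlam => ?_⟩
    by_cases hlz : lam = 0
    · simp [hlz]
    · have hnorm : ‖lam‖ ≠ 0 := norm_ne_zero_iff.2 hlz
      have hu : (‖lam‖⁻¹ • lam) ∈ T := by
        refine ⟨fun i hi => by simp [hlam i hi], ?_⟩
        simp [norm_smul, inv_mul_cancel₀ hnorm]
      have := hmin hu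
      simp only [Set.mem_setOf_eq] at this
      have heq : ‖∑ i, (‖lam‖⁻¹ • lam) i • a i‖ = ‖lam‖⁻¹ * ‖∑ i, lam i • a i‖ := by
        have : ∑ i, (‖lam‖⁻¹ • lam) i • a i = ‖lam‖⁻¹ • ∑ i, lam i • a i := by
          rw [Finset.smul_sum]
          exact Finset.sum_congr rfl fun i _ => by simp [Pi.smul_apply, mul_smul]
        rw [this, norm_smul]
        simp
      rw [heq] at this
      have hln : 0 < ‖lam‖ := lt_of_le_of_ne (norm_nonneg _) (Ne.symm hnorm)
      calc ‖∑ i, lam₁ i • a i‖ * ‖lam‖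
          ≤ (‖lam‖⁻¹ * ‖∑ i, lam i • a i‖) * ‖lam‖ :=
            mul_le_mul_of_nonneg_right this hln.le
        _ = ‖∑ i, lam i • a i‖ := by field_simp
      
lemma cone_indep_closed (a : ι → EuclideanSpace ℝ κ) (S : Finset ι) (h : MSIndep a S) :
    IsClosed {x : EuclideanSpace ℝ κ | ∃ lam : ι → ℝ,
      (∀ i, 0 ≤ lam i) ∧ (∀ i ∉ S, lam i = 0) ∧ x = ∑ i, lam i • a i} := by
  classical
  obtain ⟨mS, hmS, hmle⟩ := indep_bound a S h
  set D : Set (ι → ℝ) := {lam | (∀ i, 0 ≤ lam i) ∧ (∀ i ∉ S, lam i = 0)} with hD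
  have hDclosed : IsClosed D := by
    have : D = {lam : ι → ℝ | ∀ i, 0 ≤ lam i} ∩ {lam | ∀ i ∉ S, lam i = 0} := rfl
    rw [this]
    refine IsClosed.inter ?_ (supported_closed S)
    have : {lam : ι → ℝ | ∀ i, 0 ≤ lam i} = ⋂ i, {lam : ι → ℝ | 0 ≤ lam i} := by
      ext lam; simp [Set.mem_iInter]
    rw [this]
    exact isClosed_iInter fun i => isClosed_le continuous_const (continuous_apply i)
  haveI : CompleteSpace D := hDclosed.completeSpace_coe
  set f : D → EuclideanSpace ℝ κ := fun lam => combo a (lam : ι → ℝ) with hf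
  have hfu : UniformContinuous f :=
    ((combo a).toContinuousLinearMap.uniformContinuous).comp uniformContinuous_subtype_val
  have hfa : AntilipschitzWith (mS⁻¹.toNNReal) f := by
    apply AntilipschitzWith.of_le_mul_dist
    intro lam1 lam2
    rw [Subtype.dist_eq, dist_eq_norm, dist_eq_norm]
    have hsupp : ∀ i ∉ S, ((lam1 : ι → ℝ) - (lam2 : ι → ℝ)) i = 0 := by
      intro i hi
      simp [lam1.2.2 i hi, lam2.2.2 i hi]
    have hkey := hmle _ hsupp
    have : ∑ i, ((lam1 : ι → ℝ) - (lam2 : ι → ℝ)) i • a i = f lam1 - f lam2 := by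
      simp only [hf]
      rw [← map_sub]
      rfl
    rw [this] at hkey
    have hc : (mS⁻¹.toNNReal : ℝ) = mS⁻¹ := Real.coe_toNNReal _ (by positivity)
    rw [hc]
    rw [← le_div_iff₀' hmS] at hkey
    rwa [div_eq_inv_mul] at hkey
  have hrange : Set.range f = {x : EuclideanSpace ℝ κ | ∃ lam : ι → ℝ,
      (∀ i, 0 ≤ lam i) ∧ (∀ i ∉ S, lam i = 0) ∧ x = ∑ i, lam i • a i} := by
    ext x
    constructor
    · rintro ⟨⟨lam, h1, h2⟩, rfl⟩
      exact ⟨lam, h1, h2, rfl⟩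
    · rintro ⟨lam, h1, h2, rfl⟩
      exact ⟨⟨lam, h1, h2⟩, rfl⟩
  rw [← hrange]
  exact hfa.isClosed_range hfu

end


section
variable {ι κ : Type*} [Fintype ι] [Fintype κ]

-- placeholders from parts 1-2 (axiomatized here for speed; concatenated later)
/-- The finitely generated cone on generators `a i`, `i ∈ A`. -/
def msCone (a : ι → EuclideanSpace ℝ κ) (A : Finset ι) : Set (EuclideanSpace ℝ κ) :=
  {x | ∃ lam : ι → ℝ, (∀ i, 0 ≤ lam i) ∧ (∀ i ∉ A, lam i = 0) ∧ x = ∑ i, lam i • a i}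

lemma msCone_closed (a : ι → EuclideanSpace ℝ κ) (A : Finset ι) :
    IsClosed (msCone a A) := by
  classical
  have hunion : msCone a A = ⋃ S ∈ {S : Finset ι | S ⊆ A ∧ MSIndep a S}, msCone a S := by
    ext x
    simp only [Set.mem_iUnion, Set.mem_setOf_eq]
    constructor
    · rintro ⟨lam, h1, h2, rfl⟩
      obtain ⟨mu, hmu1, hmu2, hmu3, hmu4⟩ := ms_caratheodory a lam h1
      refine ⟨univ.filter (fun i => mu i ≠ 0), ⟨?_, hmu4⟩, mu, hmu1, ?_, hmu3.symm⟩
      · intro i hi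
        simp only [mem_filter, mem_univ, true_and] at hi
        by_contra hiA
        exact hi (hmu2 i (h2 i hiA))
      · intro i hi
        simp only [mem_filter, mem_univ, true_and, not_not] at hi
        exact hi
    · rintro ⟨S, ⟨hSA, _⟩, lam, h1, h2, rfl⟩
      exact ⟨lam, h1, fun i hi => h2 i (fun hiS => hi (hSA hiS)), rfl⟩
  rw [hunion]
  refine Set.Finite.isClosed_biUnion (Set.toFinite _) ?_
  rintro S ⟨_, hS⟩
  exact cone_indep_closed a S hS

/-- The cone as a `ConvexCone`. -/
noncomputable def msConvexCone (a : ι → EuclideanSpace ℝ κ) (A : Finset ι) :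
    ConvexCone ℝ (EuclideanSpace ℝ κ) where
  carrier := msCone a A
  smul_mem' := by
    rintro c hc x ⟨lam, h1, h2, rfl⟩
    refine ⟨fun i => c * lam i, fun i => mul_nonneg hc.le (h1 i),
      fun i hi => by simp [h2 i hi], ?_⟩
    rw [Finset.smul_sum]
    exact Finset.sum_congr rfl fun i _ => (mul_smul c (lam i) (a i)).symm
  add_mem' := by
    rintro x ⟨lam, h1, h2, rfl⟩ y ⟨mu, g1, g2, rfl⟩
    refine ⟨fun i => lam i + mu i, fun i => add_nonneg (h1 i) (g1 i),
      fun i hi => by simp [h2 i hi, g2 i hi], ?_⟩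
    rw [← Finset.sum_add_distrib]
    exact Finset.sum_congr rfl fun i _ => (add_smul (lam i) (mu i) (a i)).symm

lemma exists_pos_forall_le {α : Type*} (s : Finset α) (g : α → ℝ)
    (h : ∀ i ∈ s, 0 < g i) : ∃ δ : ℝ, 0 < δ ∧ ∀ i ∈ s, δ ≤ g i := by
  rcases s.eq_empty_or_nonempty with rfl | hne
  · exact ⟨1, one_pos, by simp⟩
  · refine ⟨s.inf' hne g, ?_, fun i hi => Finset.inf'_le g hi⟩
    rw [Finset.lt_inf'_iff]
    exact h

/-- Farkas: a normal direction at `zbar` lies in the cone of active constraints. -/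
lemma normal_mem_cone (a : ι → EuclideanSpace ℝ κ) (b : ι → ℝ)
    (zbar : EuclideanSpace ℝ κ) (hzbar : ∀ i, ⟪a i, zbar⟫ ≤ b i)
    (v : EuclideanSpace ℝ κ)
    (hv : ∀ w, (∀ i, ⟪a i, w⟫ ≤ b i) → ⟪v, w - zbar⟫ ≤ 0) :
    ∃ lam : ι → ℝ, (∀ i, 0 ≤ lam i) ∧ (∀ i, lam i ≠ 0 → ⟪a i, zbar⟫ = b i) ∧
      v = ∑ i, lam i • a i := by
  classical
  set A : Finset ι := univ.filter (fun i => ⟪a i, zbar⟫ = b i) with hA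
  suffices hmem : v ∈ msCone a A by
    obtain ⟨lam, h1, h2, h3⟩ := hmem
    refine ⟨lam, h1, fun i hi => ?_, h3⟩
    by_contra hact
    refine hi (h2 i ?_)
    simp only [hA, mem_filter, mem_univ, true_and]
    exact hact
  by_contra hnot
  have hsep : ∃ y : EuclideanSpace ℝ κ, (∀ x ∈ msConvexCone a A, 0 ≤ ⟪x, y⟫) ∧ ⟪y, v⟫ < 0 := by
    have hne : ((msConvexCone a A : Set (EuclideanSpace ℝ κ))).Nonempty :=
      ⟨0, ⟨fun _ => 0, by simp, by simp, by simp⟩⟩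
    have hcl : IsClosed ((msConvexCone a A : Set (EuclideanSpace ℝ κ))) := msCone_closed a A
    obtain ⟨y, hy1, hy2⟩ := ProperCone.hyperplane_separation' (x₀ := v)
      (⟨(msConvexCone a A).toPointedCone (ConvexCone.Pointed.of_nonempty_of_isClosed hne hcl),
        hcl⟩ : ProperCone ℝ (EuclideanSpace ℝ κ)) hnot
    exact ⟨y, fun x hx => hy1 x hx, by rw [real_inner_comm]; exact hy2⟩
  obtain ⟨y, hy1, hy2⟩ := hsep
  set d : EuclideanSpace ℝ κ := -y with hd
  have hvd : 0 < ⟪v, d⟫ := by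
    rw [hd, inner_neg_right, ← real_inner_comm]
    linarith
  have had : ∀ i ∈ A, ⟪a i, d⟫ ≤ 0 := by
    intro i hiA
    have hmem : a i ∈ msConvexCone a A := by
      refine ⟨fun k => if k = i then 1 else 0, fun k => by positivity,
        fun k hk => by simp; rintro rfl; exact absurd hiA hk, ?_⟩
      simp [ite_smul]
    have := hy1 (a i) hmem
    rw [hd, inner_neg_right]
    linarith
  -- pick a step size
  have hmemA : ∀ i, ⟪a i, zbar⟫ = b i → i ∈ A := fun i h => by
    rw [hA, mem_filter]; exact ⟨mem_univ i, h⟩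
  have hgpos : ∀ i ∈ univ.filter (fun i => i ∉ A),
      0 < (b i - ⟪a i, zbar⟫) / (1 + |⟪a i, d⟫|) := by
    intro i hi
    simp only [mem_filter, mem_univ, true_and, hA, not_not] at hi
    have hlt : ⟪a i, zbar⟫ < b i := by
      refine lt_of_le_of_ne (hzbar i) ?_
      intro h
      exact hi h
    have h0 : (0:ℝ) < 1 + |⟪a i, d⟫| := by positivity
    exact div_pos (by linarith) h0
  obtain ⟨δ, hδpos, hδle⟩ := exists_pos_forall_le (univ.filter (fun i => i ∉ A))
    (fun i => (b i - ⟪a i, zbar⟫) / (1 + |⟪a i, d⟫|)) hgpos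
  have hw : ∀ i, ⟪a i, zbar + δ • d⟫ ≤ b i := by
    intro i
    rw [inner_add_right, real_inner_smul_right]
    by_cases hiA : i ∈ A
    · have h1 : ⟪a i, zbar⟫ = b i := by simpa [hA] using hiA
      have h2 := had i hiA
      nlinarith
    · have hle := hδle i (by simp [hiA])
      have hlt : ⟪a i, zbar⟫ < b i := by
        refine lt_of_le_of_ne (hzbar i) ?_
        intro h; exact hiA (hmemA i h)
      have hpos : (0:ℝ) < 1 + |⟪a i, d⟫| := by positivity
      have : δ * ⟪a i, d⟫ ≤ δ * (1 + |⟪a i, d⟫|) := by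
        have h1 : ⟪a i, d⟫ ≤ 1 + |⟪a i, d⟫| := by
          have := le_abs_self ⟪a i, d⟫; linarith
        exact mul_le_mul_of_nonneg_left h1 hδpos.le
      have h2 : δ * (1 + |⟪a i, d⟫|) ≤ b i - ⟪a i, zbar⟫ := by
        rw [← div_mul_cancel₀ (b i - ⟪a i, zbar⟫) (ne_of_gt hpos)]
        exact mul_le_mul_of_nonneg_right hle hpos.le
      linarith
  have := hv _ hw
  rw [add_sub_cancel_left, real_inner_smul_right] at this
  nlinarith

end


section
variable {ι κ : Type*} [Fintype ι] [Fintype κ]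

/-- Key uniform bound: ∑ λᵢ ≤ c‖∑ λᵢ aᵢ‖ for nonneg λ with independent support. -/
lemma sum_le_norm_combo (a : ι → EuclideanSpace ℝ κ) :
    ∃ c : ℝ, 0 < c ∧ ∀ lam : ι → ℝ, (∀ i, 0 ≤ lam i) →
      MSIndep a (univ.filter (fun i => lam i ≠ 0)) →
      ∑ i, lam i ≤ c * ‖∑ i, lam i • a i‖ := by
  classical
  have h1 : ∀ S : Finset ι, ∃ mS : ℝ, 0 < mS ∧ (MSIndep a S →
      ∀ lam : ι → ℝ, (∀ i ∉ S, lam i = 0) → mS * ‖lam‖ ≤ ‖∑ i, lam i • a i‖) := by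
    intro S
    by_cases h : MSIndep a S
    · obtain ⟨mS, hm1, hm2⟩ := indep_bound a S h
      exact ⟨mS, hm1, fun _ => hm2⟩
    · exact ⟨1, one_pos, fun h' => absurd h' h⟩
  choose msm hmsm1 hmsm2 using h1
  have hune : (univ : Finset (Finset ι)).Nonempty := ⟨∅, mem_univ ∅⟩
  set B : ℝ := univ.sup' hune (fun S => (msm S)⁻¹) with hB
  have hBpos : 0 < B := by
    rw [hB, Finset.lt_sup'_iff]
    exact ⟨∅, mem_univ ∅, inv_pos.2 (hmsm1 ∅)⟩
  refine ⟨(Fintype.card ι + 1) * B, by positivity, fun lam hpos hind => ?_⟩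
  set S := univ.filter (fun i => lam i ≠ 0) with hS
  have hsupp : ∀ i ∉ S, lam i = 0 := by
    intro i hi
    simp only [hS, mem_filter, mem_univ, true_and, not_not] at hi
    exact hi
  have key := hmsm2 S hind lam hsupp
  have h2 : ∑ i, lam i ≤ (Fintype.card ι) * ‖lam‖ := by
    calc ∑ i, lam i ≤ ∑ _i : ι, ‖lam‖ := by
          refine Finset.sum_le_sum fun i _ => ?_
          calc lam i ≤ |lam i| := le_abs_self _
            _ = ‖lam i‖ := (Real.norm_eq_abs _).symm
            _ ≤ ‖lam‖ := norm_le_pi_norm lam i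
      _ = (Fintype.card ι) * ‖lam‖ := by simp [Finset.sum_const, mul_comm]
  have h3 : ‖lam‖ ≤ B * ‖∑ i, lam i • a i‖ := by
    have hmS := hmsm1 S
    have : ‖lam‖ ≤ (msm S)⁻¹ * ‖∑ i, lam i • a i‖ := by
      rw [← le_div_iff₀' hmS] at key
      rwa [div_eq_inv_mul] at key
    refine this.trans ?_
    refine mul_le_mul_of_nonneg_right ?_ (norm_nonneg _)
    exact Finset.le_sup' (fun S => (msm S)⁻¹) (mem_univ S)
  calc ∑ i, lam i ≤ (Fintype.card ι) * ‖lam‖ := h2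
    _ ≤ (Fintype.card ι) * (B * ‖∑ i, lam i • a i‖) :=
        mul_le_mul_of_nonneg_left h3 (by positivity)
    _ ≤ ((Fintype.card ι) + 1) * (B * ‖∑ i, lam i • a i‖) := by
        refine mul_le_mul_of_nonneg_right (by linarith) ?_
        positivity
    _ = ((Fintype.card ι) + 1) * B * ‖∑ i, lam i • a i‖ := by ring

/-- Hoffman-type error bound for a system of linear inequalities. -/
theorem hoffman_bound (a : ι → EuclideanSpace ℝ κ) (b : ι → ℝ)
    (hP : ∃ z0 : EuclideanSpace ℝ κ, ∀ i, ⟪a i, z0⟫ ≤ b i) :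
    ∃ C : ℝ, 0 < C ∧ ∀ (z : EuclideanSpace ℝ κ) (t : ℝ), 0 ≤ t →
      (∀ i, ⟪a i, z⟫ ≤ b i + t) →
      ∃ p : EuclideanSpace ℝ κ, (∀ i, ⟪a i, p⟫ ≤ b i) ∧ ‖z - p‖ ≤ C * t := by
  classical
  obtain ⟨c, hc, hckey⟩ := sum_le_norm_combo a
  refine ⟨c, hc, fun z t ht hviol => ?_⟩
  set P : Set (EuclideanSpace ℝ κ) := {w | ∀ i, ⟪a i, w⟫ ≤ b i} with hPdef
  have hPconv : Convex ℝ P := by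
    intro w1 hw1 w2 hw2 s r hs hr hsr
    intro i
    have h1 := hw1 i
    have h2 := hw2 i
    calc ⟪a i, s • w1 + r • w2⟫ = s * ⟪a i, w1⟫ + r * ⟪a i, w2⟫ := by
          rw [inner_add_right, real_inner_smul_right, real_inner_smul_right]
      _ ≤ s * b i + r * b i := by
          exact add_le_add (mul_le_mul_of_nonneg_left h1 hs) (mul_le_mul_of_nonneg_left h2 hr)
      _ = b i := by rw [← add_mul, hsr, one_mul]
  have hPclosed : IsClosed P := by
    have : P = ⋂ i, {w : EuclideanSpace ℝ κ | ⟪a i, w⟫ ≤ b i} := by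
      ext w; simp [hPdef, Set.mem_iInter]
    rw [this]
    exact isClosed_iInter fun i =>
      isClosed_le (Continuous.inner continuous_const continuous_id) continuous_const
  obtain ⟨zbar, hzbarP, hmin⟩ :=
    exists_norm_eq_iInf_of_complete_convex hP hPclosed.isComplete hPconv z
  have hinner := (norm_eq_iInf_iff_real_inner_le_zero hPconv hzbarP).1 hmin
  obtain ⟨lam, hlam1, hlam2, hlam3⟩ := normal_mem_cone a b zbar hzbarP (z - zbar)
    (fun w hw => hinner w hw)
  obtain ⟨mu, hmu1, hmu2, hmu3, hmu4⟩ := ms_caratheodory a lam hlam1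
  have hveq : z - zbar = ∑ i, mu i • a i := by rw [hmu3, ← hlam3]
  have hmuact : ∀ i, mu i ≠ 0 → ⟪a i, zbar⟫ = b i := by
    intro i hi
    by_contra h
    exact hi (hmu2 i (by_contra fun h' => h (hlam2 i h')))
  -- ‖v‖² ≤ (∑ μ) t
  set v := z - zbar with hvdef
  have hnormsq : ‖v‖ ^ 2 ≤ (∑ i, mu i) * t := by
    have h1 : ‖v‖ ^ 2 = ⟪v, v⟫ := (real_inner_self_eq_norm_sq v).symm
    have h2 : ⟪v, v⟫ = ∑ i, mu i * ⟪a i, v⟫ := by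
      nth_rewrite 1 [hveq]
      rw [sum_inner]
      exact Finset.sum_congr rfl fun i _ => real_inner_smul_left _ _ _
    rw [h1, h2, Finset.sum_mul]
    refine Finset.sum_le_sum fun i _ => ?_
    by_cases hmi : mu i = 0
    · simp [hmi]
    · have hact := hmuact i hmi
      have : ⟪a i, v⟫ = ⟪a i, z⟫ - b i := by
        rw [hvdef, inner_sub_right, hact]
      rw [this]
      have := hviol i
      exact mul_le_mul_of_nonneg_left (by linarith) (hmu1 i)
  have hsum := hckey mu hmu1 hmu4
  rw [← hveq] at hsum
  refine ⟨zbar, hzbarP, ?_⟩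
  by_cases hv0 : ‖v‖ = 0
  · calc ‖z - zbar‖ = 0 := hv0
      _ ≤ c * t := by positivity
  · have hvpos : 0 < ‖v‖ := lt_of_le_of_ne (norm_nonneg _) (Ne.symm hv0)
    have h4 : ‖v‖ ^ 2 ≤ c * ‖v‖ * t := by
      calc ‖v‖ ^ 2 ≤ (∑ i, mu i) * t := hnormsq
        _ ≤ (c * ‖v‖) * t := mul_le_mul_of_nonneg_right hsum ht
    have : ‖v‖ * ‖v‖ ≤ (c * t) * ‖v‖ := by nlinarith
    exact le_of_mul_le_mul_right (by linarith : ‖v‖ * ‖v‖ ≤ (c*t) * ‖v‖) hvpos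
end


-- vertex of the simplex
lemma vertex_mem {k : ℕ} (i0 : Fin k) :
    (fun i => if i = i0 then (1:ℝ) else 0) ∈ stdSimplex ℝ (Fin k) := by
  constructor
  · intro i; positivity
  · simp

lemma sum_vertex {k : ℕ} (i0 : Fin k) (c : Fin k → ℝ) :
    ∑ i, (if i = i0 then (1:ℝ) else 0) * c i = c i0 := by
  simp [ite_mul]

lemma payoff_x_linear {k l : ℕ} (U : Matrix (Fin k) (Fin l) ℝ) (x : Fin k → ℝ)
    (y : Fin l → ℝ) : payoff U x y = ∑ i, x i * (∑ j, U i j * y j) := by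
  simp [payoff, Finset.mul_sum, mul_assoc]

lemma payoff_y_linear {k l : ℕ} (U : Matrix (Fin k) (Fin l) ℝ) (x : Fin k → ℝ)
    (y : Fin l → ℝ) : payoff U x y = ∑ j, y j * (∑ i, x i * U i j) := by
  rw [payoff, Finset.sum_comm]
  refine Finset.sum_congr rfl fun j _ => ?_
  rw [Finset.mul_sum]
  exact Finset.sum_congr rfl fun i _ => by ring

lemma sum_mul_le {k : ℕ} {p : Fin k → ℝ} (hp : p ∈ stdSimplex ℝ (Fin k))
    {c : Fin k → ℝ} {M : ℝ} (h : ∀ i, c i ≤ M) : ∑ i, p i * c i ≤ M := by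
  calc ∑ i, p i * c i ≤ ∑ i, p i * M :=
        Finset.sum_le_sum fun i _ => mul_le_mul_of_nonneg_left (h i) (hp.1 i)
    _ = M := by rw [← Finset.sum_mul, hp.2, one_mul]

lemma le_sum_mul {k : ℕ} {p : Fin k → ℝ} (hp : p ∈ stdSimplex ℝ (Fin k))
    {c : Fin k → ℝ} {M : ℝ} (h : ∀ i, M ≤ c i) : M ≤ ∑ i, p i * c i := by
  calc M = ∑ i, p i * M := by rw [← Finset.sum_mul, hp.2, one_mul]
    _ ≤ ∑ i, p i * c i :=
        Finset.sum_le_sum fun i _ => mul_le_mul_of_nonneg_left (h i) (hp.1 i)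

lemma simplex_sSup {k : ℕ} (hk : 0 < k) (c : Fin k → ℝ) :
    sSup ((fun p => ∑ i, p i * c i) '' stdSimplex ℝ (Fin k)) =
      univ.sup' ⟨⟨0, hk⟩, mem_univ _⟩ c := by
  refine IsGreatest.csSup_eq ⟨?_, ?_⟩
  · obtain ⟨i0, _, heq⟩ := Finset.exists_mem_eq_sup' (⟨⟨0, hk⟩, mem_univ _⟩ :
      (univ : Finset (Fin k)).Nonempty) c
    refine ⟨fun i => if i = i0 then 1 else 0, vertex_mem i0, ?_⟩
    show ∑ i, (if i = i0 then (1:ℝ) else 0) * c i = _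
    rw [sum_vertex]; exact heq.symm
  · rintro q ⟨p, hp, rfl⟩
    exact sum_mul_le hp fun i => Finset.le_sup' c (mem_univ i)

lemma simplex_sInf {k : ℕ} (hk : 0 < k) (c : Fin k → ℝ) :
    sInf ((fun p => ∑ i, p i * c i) '' stdSimplex ℝ (Fin k)) =
      univ.inf' ⟨⟨0, hk⟩, mem_univ _⟩ c := by
  refine IsLeast.csInf_eq ⟨?_, ?_⟩
  · obtain ⟨i0, _, heq⟩ := Finset.exists_mem_eq_inf' (⟨⟨0, hk⟩, mem_univ _⟩ :
      (univ : Finset (Fin k)).Nonempty) c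
    refine ⟨fun i => if i = i0 then 1 else 0, vertex_mem i0, ?_⟩
    show ∑ i, (if i = i0 then (1:ℝ) else 0) * c i = _
    rw [sum_vertex]; exact heq.symm
  · rintro q ⟨p, hp, rfl⟩
    exact le_sum_mul hp fun i => Finset.inf'_le c (mem_univ i)

lemma exploit_eq {n m : ℕ} (hn : 0 < n) (hm : 0 < m) (U : Matrix (Fin n) (Fin m) ℝ)
    (x : Fin n → ℝ) (y : Fin m → ℝ) :
    exploit U x y = univ.sup' ⟨⟨0, hn⟩, mem_univ _⟩ (fun i => ∑ j, U i j * y j) -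
      univ.inf' ⟨⟨0, hm⟩, mem_univ _⟩ (fun j => ∑ i, x i * U i j) := by
  rw [exploit]
  congr 1
  · rw [show (fun x' => payoff U x' y) = fun p => ∑ i, p i * (∑ j, U i j * y j) from
      funext fun x' => payoff_x_linear U x' y]
    exact simplex_sSup hn _
  · rw [show (fun y' => payoff U x y') = fun p => ∑ j, p j * (∑ i, x i * U i j) from
      funext fun y' => payoff_y_linear U x y']
    exact simplex_sInf hm _

lemma isNash_iff {n m : ℕ} (U : Matrix (Fin n) (Fin m) ℝ) (xs : Fin n → ℝ) (ys : Fin m → ℝ) :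
    IsNash U xs ys ↔ xs ∈ stdSimplex ℝ (Fin n) ∧ ys ∈ stdSimplex ℝ (Fin m) ∧
      ∀ i j, (∑ j', U i j' * ys j') ≤ (∑ i', xs i' * U i' j) := by
  constructor
  · rintro ⟨h1, h2, h3, h4⟩
    refine ⟨h1, h2, fun i j => ?_⟩
    have hx := h3 _ (vertex_mem i)
    have hy := h4 _ (vertex_mem j)
    simp only [payoff_x_linear] at hx
    simp only [payoff_y_linear] at hy
    rw [sum_vertex] at hx
    rw [sum_vertex] at hy
    have hlink := (payoff_x_linear U xs ys).symm.trans (payoff_y_linear U xs ys)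
    linarith
  · rintro ⟨h1, h2, hij⟩
    have hle : ∀ i, (∑ j', U i j' * ys j') ≤ payoff U xs ys := by
      intro i
      rw [payoff_y_linear]
      exact le_sum_mul h2 fun j => hij i j
    have hge : ∀ j, payoff U xs ys ≤ (∑ i', xs i' * U i' j) := by
      intro j
      rw [payoff_x_linear]
      exact sum_mul_le h1 fun i => hij i j
    refine ⟨h1, h2, fun x hx => ?_, fun y hy => ?_⟩
    · rw [payoff_x_linear U x ys]
      exact sum_mul_le hx hle
    · rw [payoff_y_linear U xs y]
      exact le_sum_mul hy hge


/-- Index type for the constraints cutting out the NE set. -/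
def gIdx (n m : ℕ) : Type := (Fin (n+m)) ⊕ (Bool × Bool) ⊕ (Fin n × Fin m)

instance (n m : ℕ) : Fintype (gIdx n m) := by unfold gIdx; infer_instance

/-- Constraint normal vectors. -/
def conVec {n m : ℕ} (U : Matrix (Fin n) (Fin m) ℝ) :
    gIdx n m → EuclideanSpace ℝ (Fin (n+m))
  | Sum.inl k => WithLp.toLp 2 (fun k' => if k' = k then -1 else 0)
  | Sum.inr (Sum.inl (px, sgn)) => WithLp.toLp 2 (fun k' => (if sgn then (1:ℝ) else -1) *
      Fin.addCases (fun _ => if px then (1:ℝ) else 0) (fun _ => if px then 0 else 1) k')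
  | Sum.inr (Sum.inr (i, j)) => WithLp.toLp 2 (fun k' =>
      Fin.addCases (fun i' => -(U i' j)) (fun j' => U i j') k')

/-- Constraint right-hand sides. -/
def conB {n m : ℕ} (_ : Matrix (Fin n) (Fin m) ℝ) : gIdx n m → ℝ
  | Sum.inl _ => 0
  | Sum.inr (Sum.inl (_, sgn)) => if sgn then 1 else -1
  | Sum.inr (Sum.inr _) => 0

lemma inner_euc {N : ℕ} (a z : EuclideanSpace ℝ (Fin N)) : ⟪a, z⟫ = ∑ k, a k * z k := by
  simp [PiLp.inner_apply, RCLike.inner_apply, conj_trivial]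
  exact Finset.sum_congr rfl fun _ _ => mul_comm _ _

lemma inner_con_nonneg {n m : ℕ} (U : Matrix (Fin n) (Fin m) ℝ)
    (z : EuclideanSpace ℝ (Fin (n+m))) (k : Fin (n+m)) :
    ⟪conVec U (Sum.inl k), z⟫ = - z k := by
  rw [inner_euc]
  simp [conVec, ite_mul]

lemma inner_con_sum {n m : ℕ} (U : Matrix (Fin n) (Fin m) ℝ)
    (z : EuclideanSpace ℝ (Fin (n+m))) (px sgn : Bool) :
    ⟪conVec U (Sum.inr (Sum.inl (px, sgn))), z⟫ = (if sgn then (1:ℝ) else -1) *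
      (if px then ∑ i, z (Fin.castAdd m i) else ∑ j, z (Fin.natAdd n j)) := by
  rw [inner_euc]
  show ∑ k, ((if sgn then (1:ℝ) else -1) *
      Fin.addCases (fun _ => if px then (1:ℝ) else 0) (fun _ => if px then 0 else 1) k) * z k = _
  rw [Fin.sum_univ_add]
  simp only [Fin.addCases_left, Fin.addCases_right]
  cases px <;> cases sgn <;> simp [Finset.sum_neg_distrib]
  
lemma inner_con_game {n m : ℕ} (U : Matrix (Fin n) (Fin m) ℝ)
    (z : EuclideanSpace ℝ (Fin (n+m))) (i : Fin n) (j : Fin m) :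
    ⟪conVec U (Sum.inr (Sum.inr (i, j))), z⟫ =
      (∑ j', U i j' * z (Fin.natAdd n j')) - (∑ i', z (Fin.castAdd m i') * U i' j) := by
  rw [inner_euc]
  show ∑ k, (Fin.addCases (fun i' => -(U i' j)) (fun j' => U i j') k) * z k = _
  rw [Fin.sum_univ_add]
  simp only [Fin.addCases_left, Fin.addCases_right]
  rw [add_comm, sub_eq_add_neg]
  congr 1
  rw [← Finset.sum_neg_distrib]
  exact Finset.sum_congr rfl fun i' _ => by ring



def appendE {n m : ℕ} (x : Fin n → ℝ) (y : Fin m → ℝ) : EuclideanSpace ℝ (Fin (n+m)) :=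
  WithLp.toLp 2 (Fin.append x y)

lemma appendE_left {n m : ℕ} (x : Fin n → ℝ) (y : Fin m → ℝ) (i : Fin n) :
    appendE x y (Fin.castAdd m i) = x i := Fin.append_left x y i
lemma appendE_right {n m : ℕ} (x : Fin n → ℝ) (y : Fin m → ℝ) (j : Fin m) :
    appendE x y (Fin.natAdd n j) = y j := Fin.append_right x y j

def xpart {n m : ℕ} (z : EuclideanSpace ℝ (Fin (n+m))) : Fin n → ℝ :=
  fun i => z (Fin.castAdd m i)
def ypart {n m : ℕ} (z : EuclideanSpace ℝ (Fin (n+m))) : Fin m → ℝ :=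
  fun j => z (Fin.natAdd n j)

lemma exploit_nonneg {n m : ℕ} (hn : 0 < n) (hm : 0 < m) (U : Matrix (Fin n) (Fin m) ℝ)
    {x : Fin n → ℝ} {y : Fin m → ℝ} (hx : x ∈ stdSimplex ℝ (Fin n))
    (hy : y ∈ stdSimplex ℝ (Fin m)) : 0 ≤ exploit U x y := by
  rw [exploit_eq hn hm]
  have h1 : payoff U x y ≤ univ.sup' ⟨⟨0, hn⟩, mem_univ _⟩ (fun i => ∑ j, U i j * y j) := by
    rw [payoff_x_linear]
    exact sum_mul_le hx fun i => Finset.le_sup' (fun i => ∑ j, U i j * y j) (mem_univ i)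
  have h2 : univ.inf' ⟨⟨0, hm⟩, mem_univ _⟩ (fun j => ∑ i, x i * U i j) ≤ payoff U x y := by
    rw [payoff_y_linear]
    exact le_sum_mul hy fun j => Finset.inf'_le (fun j => ∑ i, x i * U i j) (mem_univ j)
  linarith

lemma sat_iff_nash {n m : ℕ} (U : Matrix (Fin n) (Fin m) ℝ)
    (z : EuclideanSpace ℝ (Fin (n+m))) :
    (∀ ix, ⟪conVec U ix, z⟫ ≤ conB U ix) ↔ IsNash U (xpart z) (ypart z) := by
  rw [isNash_iff]
  constructor
  · intro h
    have hpos : ∀ k, 0 ≤ z k := by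
      intro k
      have := h (Sum.inl k)
      rw [inner_con_nonneg] at this
      have hb : conB U (Sum.inl k) = 0 := rfl
      rw [hb] at this
      linarith
    have hsx : ∑ i, xpart z i = 1 := by
      have h1 := h (Sum.inr (Sum.inl (true, true)))
      have h2 := h (Sum.inr (Sum.inl (true, false)))
      rw [inner_con_sum] at h1 h2
      simp [conB] at h1 h2
      change ∑ i, z (Fin.castAdd m i) = 1
      linarith
    have hsy : ∑ j, ypart z j = 1 := by
      have h1 := h (Sum.inr (Sum.inl (false, true)))
      have h2 := h (Sum.inr (Sum.inl (false, false)))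
      rw [inner_con_sum] at h1 h2
      simp [conB] at h1 h2
      change ∑ j, z (Fin.natAdd n j) = 1
      linarith
    refine ⟨⟨fun i => hpos _, hsx⟩, ⟨fun j => hpos _, hsy⟩, fun i j => ?_⟩
    have := h (Sum.inr (Sum.inr (i, j)))
    rw [inner_con_game] at this
    simp only [conB] at this
    change ∑ j', U i j' * ypart z j' ≤ ∑ i', xpart z i' * U i' j
    unfold xpart ypart
    linarith
  · rintro ⟨⟨hx1, hx2⟩, ⟨hy1, hy2⟩, hgame⟩
    intro ix
    match ix with
    | Sum.inl k =>
      rw [inner_con_nonneg]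
      show -z k ≤ (0:ℝ)
      have : 0 ≤ z k :=
        Fin.addCases (motive := fun k => 0 ≤ z k) (fun i => hx1 i) (fun j => hy1 j) k
      linarith
    | Sum.inr (Sum.inl (px, sgn)) =>
      rw [inner_con_sum]
      have hx2' : ∑ i, z (Fin.castAdd m i) = 1 := hx2
      have hy2' : ∑ j, z (Fin.natAdd n j) = 1 := hy2
      cases px <;> cases sgn <;> simp [conB, hx2', hy2']
    | Sum.inr (Sum.inr (i, j)) =>
      rw [inner_con_game]
      show _ ≤ (0:ℝ)
      have := hgame i j
      unfold xpart ypart at this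
      linarith

lemma viol_bound {n m : ℕ} (hn : 0 < n) (hm : 0 < m) (U : Matrix (Fin n) (Fin m) ℝ)
    {x : Fin n → ℝ} {y : Fin m → ℝ} (hx : x ∈ stdSimplex ℝ (Fin n))
    (hy : y ∈ stdSimplex ℝ (Fin m)) :
    ∀ ix, ⟪conVec U ix, appendE x y⟫ ≤
      conB U ix + exploit U x y := by
  have hexp := exploit_nonneg hn hm U hx hy
  have hxp : ∀ i, appendE x y (Fin.castAdd m i) = x i :=
    fun i => appendE_left x y i
  have hyp : ∀ j, appendE x y (Fin.natAdd n j) = y j :=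
    fun j => appendE_right x y j
  intro ix
  match ix with
  | Sum.inl k =>
    rw [inner_con_nonneg]
    have : 0 ≤ appendE x y k :=
      Fin.addCases (motive := fun k => 0 ≤ appendE x y k)
        (fun i => by show 0 ≤ appendE x y (Fin.castAdd m i); rw [hxp i]; exact hx.1 i)
        (fun j => by show 0 ≤ appendE x y (Fin.natAdd n j); rw [hyp j]; exact hy.1 j) k
    have hb : conB U (Sum.inl k) = 0 := rfl
    rw [hb]
    linarith
  | Sum.inr (Sum.inl (px, sgn)) =>
    rw [inner_con_sum]
    have hx2' : ∑ i, appendE x y (Fin.castAdd m i) = 1 := by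
      rw [Finset.sum_congr rfl fun i _ => hxp i]; exact hx.2
    have hy2' : ∑ j, appendE x y (Fin.natAdd n j) = 1 := by
      rw [Finset.sum_congr rfl fun j _ => hyp j]; exact hy.2
    cases px <;> cases sgn <;> simp [conB, hx2', hy2'] <;> linarith [hx.2, hy.2]
  | Sum.inr (Sum.inr (i, j)) =>
    rw [inner_con_game]
    have hb : conB U (Sum.inr (Sum.inr (i, j))) = 0 := rfl
    rw [hb, zero_add]
    have h1 : ∑ j', U i j' * appendE x y (Fin.natAdd n j') =
        ∑ j', U i j' * y j' := Finset.sum_congr rfl fun j' _ => by rw [hyp j']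
    have h2 : ∑ i', appendE x y (Fin.castAdd m i') * U i' j =
        ∑ i', x i' * U i' j := Finset.sum_congr rfl fun i' _ => by rw [hxp i']
    rw [h1, h2, exploit_eq hn hm]
    have h3 : ∑ j', U i j' * y j' ≤
        univ.sup' ⟨⟨0, hn⟩, mem_univ _⟩ (fun i => ∑ j, U i j * y j) :=
      Finset.le_sup' (fun i => ∑ j, U i j * y j) (mem_univ i)
    have h4 : univ.inf' ⟨⟨0, hm⟩, mem_univ _⟩ (fun j => ∑ i, x i * U i j) ≤
        ∑ i', x i' * U i' j :=
      Finset.inf'_le (fun j => ∑ i, x i * U i j) (mem_univ j)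
    linarith

lemma pnorm_eq_norm {n m : ℕ} (x : Fin n → ℝ) (y : Fin m → ℝ)
    (p : EuclideanSpace ℝ (Fin (n+m))) :
    pnorm (xpart p - x) (ypart p - y) =
      ‖appendE x y - p‖ := by
  rw [pnorm, EuclideanSpace.norm_eq]
  congr 1
  rw [Fin.sum_univ_add]
  congr 1
  · rw [sqnorm]
    refine Finset.sum_congr rfl fun i _ => ?_
    have : (appendE x y - p) (Fin.castAdd m i) =
        x i - p (Fin.castAdd m i) := by
      have := appendE_left x y i
      simp [PiLp.sub_apply, this]
    rw [this, Real.norm_eq_abs, sq_abs]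
    show (xpart p i - x i) ^ 2 = _
    unfold xpart
    ring
  · rw [sqnorm]
    refine Finset.sum_congr rfl fun j _ => ?_
    have : (appendE x y - p) (Fin.natAdd n j) =
        y j - p (Fin.natAdd n j) := by
      have := appendE_right x y j
      simp [PiLp.sub_apply, this]
    rw [this, Real.norm_eq_abs, sq_abs]
    show (ypart p j - y j) ^ 2 = _
    unfold ypart
    ring

/-- Saddle-point metric subregularity: distance to the NE set is bounded by
exploitability divided by a game-dependent constant. -/
theorem metric_subregularity
    {n m : ℕ} (hn : 0 < n) (hm : 0 < m)
    (U : Matrix (Fin n) (Fin m) ℝ)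
    (hNE : ∃ xs ys, IsNash U xs ys) :
    ∃ C : ℝ, 0 < C ∧ ∀ x ∈ stdSimplex ℝ (Fin n), ∀ y ∈ stdSimplex ℝ (Fin m),
      sInf {d : ℝ | ∃ xs ys, IsNash U xs ys ∧ d = pnorm (xs - x) (ys - y)} ≤
        exploit U x y / C := by
  classical
  obtain ⟨xs0, ys0, hNash0⟩ := hNE
  have hP : ∃ z0 : EuclideanSpace ℝ (Fin (n+m)), ∀ ix, ⟪conVec U ix, z0⟫ ≤ conB U ix := by
    refine ⟨appendE xs0 ys0, ?_⟩
    rw [sat_iff_nash]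
    have hxp : xpart (appendE xs0 ys0) = xs0 :=
      funext fun i => appendE_left xs0 ys0 i
    have hyp : ypart (appendE xs0 ys0) = ys0 :=
      funext fun j => appendE_right xs0 ys0 j
    rw [hxp, hyp]
    exact hNash0
  obtain ⟨C, hC, hkey⟩ := hoffman_bound (conVec U) (conB U) hP
  refine ⟨C⁻¹, inv_pos.2 hC, fun x hx y hy => ?_⟩
  have ht := exploit_nonneg hn hm U hx hy
  obtain ⟨p, hpP, hpnorm⟩ := hkey (appendE x y)
    (exploit U x y) ht (viol_bound hn hm U hx hy)
  have hpNash : IsNash U (xpart p) (ypart p) := (sat_iff_nash U p).1 hpP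
  have hmem : pnorm (xpart p - x) (ypart p - y) ∈
      {d : ℝ | ∃ xs ys, IsNash U xs ys ∧ d = pnorm (xs - x) (ys - y)} :=
    ⟨xpart p, ypart p, hpNash, rfl⟩
  have hbdd : BddBelow {d : ℝ | ∃ xs ys, IsNash U xs ys ∧ d = pnorm (xs - x) (ys - y)} := by
    refine ⟨0, ?_⟩
    rintro d ⟨xs, ys, _, rfl⟩
    exact Real.sqrt_nonneg _
  calc sInf {d : ℝ | ∃ xs ys, IsNash U xs ys ∧ d = pnorm (xs - x) (ys - y)}
      ≤ pnorm (xpart p - x) (ypart p - y) := csInf_le hbdd hmem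
    _ = ‖appendE x y - p‖ := pnorm_eq_norm x y p
    _ ≤ C * exploit U x y := hpnorm
    _ = exploit U x y / C⁻¹ := by rw [div_eq_mul_inv, inv_inv, mul_comm]
end

section
/- Let σ* = (x*, y*) be a Nash equilibrium of the game given by U, let μ > 0, let σ^r ∈ Δ^n × Δ^m be a reference profile, and let σ̂ = (x̂, ŷ) be a saddle point of the corresponding SCCP. Suppose C > 0 satisfies C·‖σ* − σ^r‖₂ ≤ ε(σ^r). Then for every profile σ ∈ Δ^n × Δ^m, ‖σ* − σ‖₂ ≤ ε(σ^r)/C + ‖σ̂ − σ‖₂. -/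
open Finset

/-!
By strong convexity of the SCCP objective `G` in `x` and strong concavity in `y`, the saddle point
satisfies `G(x*, ŷ) - G(x̂, y*) ≥ μ/2 ‖σ* - σ̂‖²`, while the Nash inequalities
`x̂ᵀUy* ≤ x*ᵀUy* ≤ x*ᵀUŷ` give `G(x*, ŷ) - G(x̂, y*) ≤ μ/2 ‖σ* - σʳ‖²`. Hence `σ̂` is at least
as close to `σ*` as `σʳ` is, and the claim follows from the triangle inequality through `σ̂`.
-/

open Matrix

lemma le_sub_of_isMinOn_of_le_chord {E : Type*} [AddCommGroup E] [Module ℝ E] {s : Set E}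
    (hs : Convex ℝ s) {f : E → ℝ} {a b : E} (ha : a ∈ s) (hb : b ∈ s) (hmin : IsMinOn f s a)
    (c : ℝ) (hchord : ∀ t ∈ Set.Ioc (0 : ℝ) 1,
      f ((1 - t) • a + t • b) ≤ (1 - t) * f a + t * f b - t * (1 - t) * c) :
    c ≤ f b - f a := by
  have hbound : ∀ t ∈ Set.Ioc (0 : ℝ) 1, (1 - t) * c ≤ f b - f a := fun t ⟨ht₀, ht₁⟩ => by
    have hmem : (1 - t) • a + t • b ∈ s := hs ha hb (by linarith) ht₀.le (by ring)
    have := (hmin hmem).trans (hchord t ⟨ht₀, ht₁⟩)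
    nlinarith
  have hlim : Filter.Tendsto (fun t : ℝ => (1 - t) * c) (nhdsWithin 0 (Set.Ioi 0)) (nhds c) := by
    have : Continuous fun t : ℝ => (1 - t) * c := by fun_prop
    simpa using (this.tendsto 0).mono_left nhdsWithin_le_nhds
  exact le_of_tendsto hlim (Filter.eventually_of_mem (Ioc_mem_nhdsGT one_pos) hbound)

lemma payoff_eq_dotProduct_mulVec {k l : ℕ} (U : Matrix (Fin k) (Fin l) ℝ) (x : Fin k → ℝ)
    (y : Fin l → ℝ) : payoff U x y = x ⬝ᵥ U *ᵥ y := by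
  simp only [payoff, dotProduct, Matrix.mulVec, Finset.mul_sum, mul_assoc]

lemma payoff_lineMap_left {k l : ℕ} (U : Matrix (Fin k) (Fin l) ℝ) (t : ℝ)
    (a b : Fin k → ℝ) (y : Fin l → ℝ) :
    payoff U ((1 - t) • a + t • b) y = (1 - t) * payoff U a y + t * payoff U b y := by
  simp [payoff_eq_dotProduct_mulVec, add_dotProduct, smul_dotProduct]

lemma payoff_lineMap_right {k l : ℕ} (U : Matrix (Fin k) (Fin l) ℝ) (t : ℝ)
    (x : Fin k → ℝ) (a b : Fin l → ℝ) :
    payoff U x ((1 - t) • a + t • b) = (1 - t) * payoff U x a + t * payoff U x b := by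
  simp [payoff_eq_dotProduct_mulVec, Matrix.mulVec_add, Matrix.mulVec_smul]

lemma sqnorm_lineMap_sub {k : ℕ} (t : ℝ) (a b c : Fin k → ℝ) :
    sqnorm ((1 - t) • a + t • b - c) =
      (1 - t) * sqnorm (a - c) + t * sqnorm (b - c) - t * (1 - t) * sqnorm (b - a) := by
  simp only [sqnorm, Finset.mul_sum, ← Finset.sum_add_distrib, ← Finset.sum_sub_distrib]
  refine Finset.sum_congr rfl fun i _ => ?_
  simp only [Pi.add_apply, Pi.sub_apply, Pi.smul_apply, smul_eq_mul]
  ring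

lemma sqnorm_nonneg {k : ℕ} (v : Fin k → ℝ) : 0 ≤ sqnorm v :=
  Finset.sum_nonneg fun _ _ => sq_nonneg _

section SCCP

variable {k l : ℕ} {U : Matrix (Fin k) (Fin l) ℝ} {μ : ℝ} {xr : Fin k → ℝ} {yr : Fin l → ℝ}

lemma sccpObj_lineMap_left (t : ℝ) (a b : Fin k → ℝ) (y : Fin l → ℝ) :
    sccpObj U μ xr yr ((1 - t) • a + t • b) y = (1 - t) * sccpObj U μ xr yr a y
      + t * sccpObj U μ xr yr b y - t * (1 - t) * (μ / 2 * sqnorm (b - a)) := by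
  simp only [sccpObj, payoff_lineMap_left, sqnorm_lineMap_sub]
  ring

lemma sccpObj_lineMap_right (t : ℝ) (x : Fin k → ℝ) (a b : Fin l → ℝ) :
    sccpObj U μ xr yr x ((1 - t) • a + t • b) = (1 - t) * sccpObj U μ xr yr x a
      + t * sccpObj U μ xr yr x b + t * (1 - t) * (μ / 2 * sqnorm (b - a)) := by
  simp only [sccpObj, payoff_lineMap_right, sqnorm_lineMap_sub]
  ring

namespace IsSaddle

variable {xh : Fin k → ℝ} {yh : Fin l → ℝ}

lemma sqnorm_sub_le_left (hsad : IsSaddle U μ xr yr xh yh) {x : Fin k → ℝ}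
    (hx : x ∈ stdSimplex ℝ (Fin k)) :
    μ / 2 * sqnorm (x - xh) ≤ sccpObj U μ xr yr x yh - sccpObj U μ xr yr xh yh :=
  le_sub_of_isMinOn_of_le_chord (f := fun x' => sccpObj U μ xr yr x' yh)
    (convex_stdSimplex ℝ (Fin k)) hsad.1 hx
    (fun x' hx' => hsad.2.2.2 x' hx') _ fun t _ => (sccpObj_lineMap_left t xh x yh).le

lemma sqnorm_sub_le_right (hsad : IsSaddle U μ xr yr xh yh) {y : Fin l → ℝ}
    (hy : y ∈ stdSimplex ℝ (Fin l)) :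
    μ / 2 * sqnorm (y - yh) ≤ sccpObj U μ xr yr xh yh - sccpObj U μ xr yr xh y := by
  have := le_sub_of_isMinOn_of_le_chord (f := fun y' => -sccpObj U μ xr yr xh y')
    (convex_stdSimplex ℝ (Fin l)) hsad.2.1 hy (fun y' hy' => neg_le_neg (hsad.2.2.1 y' hy'))
    (μ / 2 * sqnorm (y - yh)) fun t _ => by
      simp only [sccpObj_lineMap_right t xh yh y]
      linarith
  linarith

lemma pnorm_sub_le_of_isNash (hsad : IsSaddle U μ xr yr xh yh) (hμ : 0 < μ)
    {xs : Fin k → ℝ} {ys : Fin l → ℝ} (hNE : IsNash U xs ys) :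
    pnorm (xs - xh) (ys - yh) ≤ pnorm (xs - xr) (ys - yr) := by
  obtain ⟨hxs, hys, hbestx, hbesty⟩ := hNE
  have hx := hsad.sqnorm_sub_le_left hxs
  have hy := hsad.sqnorm_sub_le_right hys
  have hpay : payoff U xh ys ≤ payoff U xs yh := (hbestx xh hsad.1).trans (hbesty yh hsad.2.1)
  have hgap : μ / 2 * (sqnorm (xs - xh) + sqnorm (ys - yh))
      ≤ μ / 2 * (sqnorm (xs - xr) + sqnorm (ys - yr)) := by
    simp only [sccpObj] at hx hy
    nlinarith [sqnorm_nonneg (xh - xr), sqnorm_nonneg (yh - yr)]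
  exact Real.sqrt_le_sqrt (le_of_mul_le_mul_left hgap (half_pos hμ))

end IsSaddle

end SCCP

lemma pnorm_eq_norm_s14 {k l : ℕ} (v : Fin k → ℝ) (w : Fin l → ℝ) :
    pnorm v w = ‖WithLp.toLp 2 (Sum.elim v w)‖ := by
  rw [EuclideanSpace.norm_eq, pnorm, Fintype.sum_sum_type]
  simp [sqnorm, sq_abs]

lemma pnorm_sub_le_add {k l : ℕ} (a b c : Fin k → ℝ) (d e f : Fin l → ℝ) :
    pnorm (a - c) (d - f) ≤ pnorm (a - b) (d - e) + pnorm (b - c) (e - f) := by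
  simp only [pnorm_eq_norm_s14, Sum.elim_sub_sub, WithLp.toLp_sub]
  exact norm_sub_le_norm_sub_add_norm_sub _ _ _

theorem distance_bound_via_reference_exploitability_general
    {n m : ℕ}
    (U : Matrix (Fin n) (Fin m) ℝ) (μ : ℝ) (hμ : 0 < μ)
    (xs : Fin n → ℝ) (ys : Fin m → ℝ) (hNE : IsNash U xs ys)
    (xr : Fin n → ℝ) (yr : Fin m → ℝ)
    (xh : Fin n → ℝ) (yh : Fin m → ℝ)
    (hsad : IsSaddle U μ xr yr xh yh)
    (C : ℝ) (hC : 0 < C)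
    (hMS : C * pnorm (xs - xr) (ys - yr) ≤ exploit U xr yr) :
    ∀ x ∈ stdSimplex ℝ (Fin n), ∀ y ∈ stdSimplex ℝ (Fin m),
      pnorm (xs - x) (ys - y) ≤ exploit U xr yr / C + pnorm (xh - x) (yh - y) := by
  intro x _ y _
  have href : pnorm (xs - xr) (ys - yr) ≤ exploit U xr yr / C := by
    rwa [le_div_iff₀' hC]
  calc pnorm (xs - x) (ys - y)
      ≤ pnorm (xs - xh) (ys - yh) + pnorm (xh - x) (yh - y) := pnorm_sub_le_add _ _ _ _ _ _
    _ ≤ exploit U xr yr / C + pnorm (xh - x) (yh - y) := by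
      gcongr
      exact (hsad.pnorm_sub_le_of_isNash hμ hNE).trans href

/-- Triangle-inequality bound on the distance to the NE via the reference
exploitability and the distance to the saddle point. -/
theorem distance_bound_via_reference_exploitability
    {n m : ℕ} (hn : 0 < n) (hm : 0 < m)
    (U : Matrix (Fin n) (Fin m) ℝ) (μ : ℝ) (hμ : 0 < μ)
    (xs : Fin n → ℝ) (ys : Fin m → ℝ) (hNE : IsNash U xs ys)
    (xr : Fin n → ℝ) (yr : Fin m → ℝ)
    (hxr : xr ∈ stdSimplex ℝ (Fin n)) (hyr : yr ∈ stdSimplex ℝ (Fin m))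
    (xh : Fin n → ℝ) (yh : Fin m → ℝ)
    (hsad : IsSaddle U μ xr yr xh yh)
    (C : ℝ) (hC : 0 < C)
    (hMS : C * pnorm (xs - xr) (ys - yr) ≤ exploit U xr yr) :
    ∀ x ∈ stdSimplex ℝ (Fin n), ∀ y ∈ stdSimplex ℝ (Fin m),
      pnorm (xs - x) (ys - y) ≤ exploit U xr yr / C + pnorm (xh - x) (yh - y) :=
  distance_bound_via_reference_exploitability_general U μ hμ xs ys hNE xr yr xh yh hsad C hC hMS
end
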